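/- arXiv:0906.4239 — 3 statements merged into one kernel-verified Lean document; each statement's English description precedes it below -/
import Mathlib

section
/- Let R be a commutative ring that is a ℚ-algebra, x ∈ R, and c₀, …, c_N pairwise distinct rational numbers. Suppose q₀, …, q_N are mutually orthogonal idempotents of R with ∑_i q_i = 1 and x · q_i = c_i · q_i for all i. Then the q_i are uniquely determined: q_i = ∏_{j ≠ i} (x - c_j)/(c_i - c_j) for every i. -/
/-! If `x` acts on each `qᵢ` as the scalar `cᵢ` and the `qᵢ` sum to `1`, then every polynomial
in `x` decomposes as `p(x) = ∑ᵢ p(cᵢ) qᵢ`. Applied to the Lagrange basis polynomial `Lᵢ` of the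
nodes `c`, which satisfies `Lᵢ(cₖ) = δᵢₖ`, this gives `Lᵢ(x) = qᵢ`. -/

open Polynomial

section Eigen

variable {K R : Type*} [CommSemiring K] [CommSemiring R] [Algebra K R]

theorem aeval_mul_eq_algebraMap_eval_mul {x q : R} {a : K}
    (h : x * q = algebraMap K R a * q) (p : K[X]) :
    aeval x p * q = algebraMap K R (p.eval a) * q := by
  induction p using Polynomial.induction_on with
  | C b => simp
  | add p₁ p₂ h₁ h₂ => simp only [map_add, eval_add, add_mul, h₁, h₂]
  | monomial n b ih =>
    calc aeval x (C b * X ^ (n + 1)) * q = x * (aeval x (C b * X ^ n) * q) := by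
          simp only [map_mul, aeval_C, map_pow, aeval_X, pow_succ]; ring
      _ = algebraMap K R (eval a (C b * X ^ (n + 1))) * q := by
          rw [ih, mul_left_comm, h]; simp only [eval_mul, eval_C, eval_pow, eval_X, map_mul,
            map_pow, pow_succ]; ring

theorem aeval_eq_sum_algebraMap_eval_mul {ι : Type*} [Fintype ι] {x : R} {c : ι → K}
    {q : ι → R} (hsum : ∑ i, q i = 1) (heig : ∀ i, x * q i = algebraMap K R (c i) * q i)
    (p : K[X]) :
    aeval x p = ∑ i, algebraMap K R (p.eval (c i)) * q i := by
  calc aeval x p = ∑ i, aeval x p * q i := by rw [← Finset.mul_sum, hsum, mul_one]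
    _ = _ := Finset.sum_congr rfl fun i _ => aeval_mul_eq_algebraMap_eval_mul (heig i) p

end Eigen

theorem aeval_lagrange_basis {F R ι : Type*} [Field F] [CommRing R] [Algebra F R]
    [DecidableEq ι] (s : Finset ι) (v : ι → F) (i : ι) (x : R) :
    aeval x (Lagrange.basis s v i) =
      ∏ j ∈ s.erase i, (algebraMap F R ((v i - v j)⁻¹) * (x - algebraMap F R (v j))) := by
  simp [Lagrange.basis, Lagrange.basisDivisor, map_prod]

theorem stmt1_general {R : Type*} [CommRing R] [Algebra ℚ R]
    (N : ℕ) (x : R) (c : Fin (N + 1) → ℚ) (hc : Function.Injective c)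
    (q : Fin (N + 1) → R)
    (hsum : ∑ i, q i = 1)
    (heig : ∀ i, x * q i = algebraMap ℚ R (c i) * q i) :
    ∀ i, q i = ∏ j ∈ Finset.univ.erase i,
      (algebraMap ℚ R ((c i - c j)⁻¹) * (x - algebraMap ℚ R (c j))) := by
  intro i
  rw [← aeval_lagrange_basis, aeval_eq_sum_algebraMap_eval_mul hsum heig,
    Finset.sum_eq_single i]
  · simp [Lagrange.eval_basis_self hc.injOn (Finset.mem_univ i)]
  · intro k _ hki
    simp [Lagrange.eval_basis_of_ne hki.symm (Finset.mem_univ k)]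
  · simp

/-- Uniqueness of the Lagrange-interpolation idempotent decomposition: if
`q₀, …, q_N` are mutually orthogonal idempotents of a commutative ℚ-algebra `R`
with `∑ qᵢ = 1` and `x * qᵢ = cᵢ * qᵢ` for pairwise distinct rationals `cᵢ`,
then `qᵢ = ∏_{j ≠ i} (x - cⱼ)/(cᵢ - cⱼ)`. -/
theorem stmt1 {R : Type*} [CommRing R] [Algebra ℚ R]
    (N : ℕ) (x : R) (c : Fin (N + 1) → ℚ) (hc : Function.Injective c)
    (q : Fin (N + 1) → R)
    (hidem : ∀ i, q i * q i = q i)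
    (horth : ∀ i j, i ≠ j → q i * q j = 0)
    (hsum : ∑ i, q i = 1)
    (heig : ∀ i, x * q i = algebraMap ℚ R (c i) * q i) :
    ∀ i, q i = ∏ j ∈ Finset.univ.erase i,
      (algebraMap ℚ R ((c i - c j)⁻¹) * (x - algebraMap ℚ R (c j))) :=
  stmt1_general N x c hc q hsum heig
end

section
/- Let C be a triangulated category with a weight structure w = (C_{w≤0}, C_{w≥0}). If M is an object of C such that Hom_C(M, N) = 0 for every N ∈ C_{w≥1}, then M ∈ C_{w≤0}. -/
open CategoryTheory CategoryTheory.Limits CategoryTheory.Pretriangulated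

universe v u

/-- A weight structure (in the sense of Bondarko) on a (pre)triangulated
category `C`: a pair of isomorphism- and retract-closed classes of objects
`LE = C_{w≤0}` and `GE = C_{w≥0}` (with `C_{w≤n} := C_{w≤0}[n]`, so that
`X ∈ C_{w≤n} ↔ LE (X⟦-n⟧)`, and similarly `X ∈ C_{w≥n} ↔ GE (X⟦-n⟧)`),
satisfying semi-invariance with respect to shifts, orthogonality, and the
existence of weight filtrations. -/
structure WeightStructure (C : Type u) [Category.{v} C] [Preadditive C]
    [HasZeroObject C] [HasShift C ℤ]
    [∀ n : ℤ, (CategoryTheory.shiftFunctor C n).Additive] [Pretriangulated C] where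
  /-- the class `C_{w≤0}` -/
  LE : C → Prop
  /-- the class `C_{w≥0}` -/
  GE : C → Prop
  le_of_iso : ∀ {X Y : C}, (X ≅ Y) → LE X → LE Y
  ge_of_iso : ∀ {X Y : C}, (X ≅ Y) → GE X → GE Y
  /-- `C_{w≤0}` is closed under retracts -/
  le_retract : ∀ {X Y : C} (i : X ⟶ Y) (r : Y ⟶ X), i ≫ r = 𝟙 X → LE Y → LE X
  /-- `C_{w≥0}` is closed under retracts -/
  ge_retract : ∀ {X Y : C} (i : X ⟶ Y) (r : Y ⟶ X), i ≫ r = 𝟙 X → GE Y → GE X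
  /-- `C_{w≤0} ⊆ C_{w≤1}` -/
  le_shift : ∀ X : C, LE X → LE (X⟦(-1 : ℤ)⟧)
  /-- `C_{w≥1} ⊆ C_{w≥0}` -/
  ge_shift : ∀ X : C, GE (X⟦(-1 : ℤ)⟧) → GE X
  /-- orthogonality: `Hom(C_{w≤0}, C_{w≥1}) = 0` -/
  orthogonal : ∀ {X Y : C} (f : X ⟶ Y), LE X → GE (Y⟦(-1 : ℤ)⟧) → f = 0
  /-- weight filtrations: every `M` sits in an exact triangle `A → M → B → A[1]`
  with `A ∈ C_{w≤0}` and `B ∈ C_{w≥1}` -/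
  exists_weight_filtration : ∀ M : C, ∃ (A B : C) (f : A ⟶ M) (g : M ⟶ B)
      (h : B ⟶ A⟦(1 : ℤ)⟧),
      (Triangle.mk f g h ∈ distTriang C) ∧ LE A ∧ GE (B⟦(-1 : ℤ)⟧)

variable {C : Type u} [Category.{v} C] [Preadditive C] [HasZeroObject C]
  [HasShift C ℤ] [∀ n : ℤ, (CategoryTheory.shiftFunctor C n).Additive]
  [Pretriangulated C]

namespace WeightStructure

lemma le_of_isSplitEpi (w : WeightStructure C) {X Y : C} (p : X ⟶ Y) [IsSplitEpi p]
    (hX : w.LE X) : w.LE Y :=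
  w.le_retract (section_ p) p (IsSplitEpi.id p) hX

end WeightStructure

/-- If `Hom(M, N) = 0` for every `N ∈ C_{w≥1}`, then `M ∈ C_{w≤0}`. -/
theorem stmt8 (w : WeightStructure C) (M : C)
    (h : ∀ (N : C) (f : M ⟶ N), w.GE (N⟦(-1 : ℤ)⟧) → f = 0) : w.LE M := by
  obtain ⟨A, B, f, g, δ, hT, hA, hB⟩ := w.exists_weight_filtration M
  have : Epi f := Triangle.epi₁ _ hT (h B g hB)
  have : IsSplitEpi f := isSplitEpi_of_epi f
  exact w.le_of_isSplitEpi f hA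
end

section
/- Let C be a triangulated category with a weight structure, and let α ≤ β be integers. Call an object M 'without weights α, …, β' if there is an exact triangle M_{≤α-1} → M → M_{≥β+1} → M_{≤α-1}[1] with M_{≤α-1} ∈ C_{w≤α-1} and M_{≥β+1} ∈ C_{w≥β+1}. If K → L → M → K[1] is an exact triangle in C and both K and M are without weights α, …, β, then L is without weights α, …, β. -/
open CategoryTheory CategoryTheory.Limits CategoryTheory.Pretriangulated

universe v u

variable {C : Type u} [Category.{v} C] [Preadditive C] [HasZeroObject C]
  [HasShift C ℤ] [∀ n : ℤ, (CategoryTheory.shiftFunctor C n).Additive]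
  [Pretriangulated C]

/-- An object `M` is without weights `α, …, β` if there is an exact triangle
`M_{≤α-1} → M → M_{≥β+1} → M_{≤α-1}[1]` with `M_{≤α-1} ∈ C_{w≤α-1}` and
`M_{≥β+1} ∈ C_{w≥β+1}`. -/
def WithoutWeights (w : WeightStructure C) (α β : ℤ) (M : C) : Prop :=
  ∃ (A B : C) (f : A ⟶ M) (g : M ⟶ B) (h : B ⟶ A⟦(1 : ℤ)⟧),
    (Triangle.mk f g h ∈ distTriang C) ∧
      w.LE (A⟦-(α - 1)⟧) ∧ w.GE (B⟦-(β + 1)⟧)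

/-!
Choose weight decompositions `A_K → K → B_K` and `A_M → M → B_M`. As `Hom(A_M, B_K[1]) = 0`,
the composite `A_M → M → K[1]` factors through `A_K[1]`; the cocone `L'` of the resulting map
`A_M → A_K[1]` is an extension of `A_M` by `A_K`, hence lies in `C_{w≤α-1}`, and it maps to `L`
compatibly with the two triangles. Instead of the octahedron (only the pretriangulated axioms are
available) we compare `Hom(X, -)` along the morphism of triangles for `X ∈ C_{w≤β}`: since
`Hom(X, B_K) = Hom(X, B_M) = 0`, the four lemma makes `Hom(X, L') → Hom(X, L)` surjective and
`Hom(X, L'[1]) → Hom(X, L[1])` injective, so the cone of `L' → L` is right orthogonal to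
`C_{w≤β}`, i.e. lies in `C_{w≥β+1}`.
-/

namespace CategoryTheory.Pretriangulated.Triangle

open Preadditive

variable {T T₁ T₂ : Triangle C} {X : C}

lemma rightComp_mor₁_surjective (hT : T ∈ distTriang C)
    (hX : ∀ g : X ⟶ T.obj₃, g = 0) :
    Function.Surjective (rightComp X T.mor₁) := by
  intro b
  obtain ⟨a, rfl⟩ := T.coyoneda_exact₂ hT b (hX _)
  exact ⟨a, rfl⟩

lemma rightComp_shift_mor₁_injective (hT : T ∈ distTriang C)
    (hX : ∀ g : X ⟶ T.obj₃, g = 0) :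
    Function.Injective (rightComp X (T.mor₁⟦(1 : ℤ)⟧')) := by
  refine (injective_iff_map_eq_zero _).2 fun a ha => ?_
  obtain ⟨g, rfl⟩ := T.coyoneda_exact₁ hT a ha
  rw [hX g, zero_comp]

lemma rightComp_shift_mor₁_surjective (hT : T ∈ distTriang C)
    (hX : ∀ g : X ⟶ T.obj₃⟦(1 : ℤ)⟧, g = 0) :
    Function.Surjective (rightComp X (T.mor₁⟦(1 : ℤ)⟧')) := by
  intro b
  obtain ⟨a, rfl⟩ : ∃ a : X ⟶ T.obj₁⟦(1 : ℤ)⟧, b = a ≫ (-T.mor₁⟦(1 : ℤ)⟧') :=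
    T.rotate.rotate.coyoneda_exact₃ (rot_of_distTriang _ (rot_of_distTriang _ hT)) b (hX _)
  exact ⟨-a, by simp [rightComp]⟩

lemma eq_zero_of_rightComp_surjective_of_injective (hT : T ∈ distTriang C)
    (hs : Function.Surjective (rightComp X T.mor₁))
    (hi : Function.Injective (rightComp X (T.mor₁⟦(1 : ℤ)⟧'))) (g : X ⟶ T.obj₃) : g = 0 := by
  have hg : g ≫ T.mor₃ = 0 := (injective_iff_map_eq_zero _).1 hi _ <| show _ ≫ _ = 0 by
    rw [Category.assoc, comp_distTriang_mor_zero₃₁ _ hT, comp_zero]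
  obtain ⟨l, rfl⟩ := T.coyoneda_exact₃ hT g hg
  obtain ⟨l', rfl⟩ : ∃ l', l' ≫ T.mor₁ = l := hs l
  rw [Category.assoc, comp_distTriang_mor_zero₁₂ _ hT, comp_zero]

lemma rightComp_hom₂_surjective (hT₁ : T₁ ∈ distTriang C) (hT₂ : T₂ ∈ distTriang C)
    (φ : T₁ ⟶ T₂)
    (h₁ : Function.Surjective (rightComp X φ.hom₁))
    (h₃ : Function.Surjective (rightComp X φ.hom₃))
    (h₁' : Function.Injective (rightComp X (φ.hom₁⟦(1 : ℤ)⟧'))) :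
    Function.Surjective (rightComp X φ.hom₂) := by
  intro x
  obtain ⟨c, hc⟩ : ∃ c, c ≫ φ.hom₃ = x ≫ T₂.mor₂ := h₃ _
  have hc' : c ≫ T₁.mor₃ = 0 := (injective_iff_map_eq_zero _).1 h₁' _ <| show _ ≫ _ = 0 by
    rw [Category.assoc, φ.comm₃, reassoc_of% hc, comp_distTriang_mor_zero₂₃ _ hT₂, comp_zero]
  obtain ⟨b, rfl⟩ := T₁.coyoneda_exact₃ hT₁ c hc'
  obtain ⟨a', ha'⟩ := T₂.coyoneda_exact₂ hT₂ (x - b ≫ φ.hom₂) <| by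
    rw [sub_comp, Category.assoc, ← φ.comm₂, ← Category.assoc, hc, sub_self]
  obtain ⟨a, rfl⟩ : ∃ a, a ≫ φ.hom₁ = a' := h₁ a'
  refine ⟨b + a ≫ T₁.mor₁, show _ ≫ _ = _ from ?_⟩
  rw [add_comp, Category.assoc, φ.comm₁, ← Category.assoc, ← ha', add_sub_cancel]

lemma rightComp_hom₃_injective (hT₁ : T₁ ∈ distTriang C) (hT₂ : T₂ ∈ distTriang C)
    (φ : T₁ ⟶ T₂)
    (h₁ : Function.Surjective (rightComp X φ.hom₁))
    (h₂ : Function.Injective (rightComp X φ.hom₂))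
    (h₁' : Function.Injective (rightComp X (φ.hom₁⟦(1 : ℤ)⟧'))) :
    Function.Injective (rightComp X φ.hom₃) := by
  refine (injective_iff_map_eq_zero _).2 fun y (hy : y ≫ φ.hom₃ = 0) => ?_
  have hy' : y ≫ T₁.mor₃ = 0 := (injective_iff_map_eq_zero _).1 h₁' _ <| show _ ≫ _ = 0 by
    rw [Category.assoc, φ.comm₃, ← Category.assoc, hy, zero_comp]
  obtain ⟨b, rfl⟩ := T₁.coyoneda_exact₃ hT₁ y hy'
  obtain ⟨a', ha'⟩ := T₂.coyoneda_exact₂ hT₂ (b ≫ φ.hom₂) <| by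
    rw [Category.assoc, ← φ.comm₂, ← Category.assoc, hy]
  obtain ⟨a, rfl⟩ : ∃ a, a ≫ φ.hom₁ = a' := h₁ a'
  have hb : b = a ≫ T₁.mor₁ := h₂ <| show _ ≫ _ = _ ≫ _ by
    rw [ha', Category.assoc, Category.assoc, φ.comm₁]
  rw [hb, Category.assoc, comp_distTriang_mor_zero₁₂ _ hT₁, comp_zero]

end CategoryTheory.Pretriangulated.Triangle

namespace WeightStructure

variable (w : WeightStructure C)

lemma ge_of_le {X : C} {m n : ℤ} (hnm : n ≤ m) (hX : w.GE (X⟦-m⟧)) : w.GE (X⟦-n⟧) := by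
  induction m, hnm using Int.leInduction with
  | base => exact hX
  | succ m _ ih =>
    exact ih (w.ge_shift _
      (w.ge_of_iso ((shiftFunctorAdd' C (-m) (-1) (-(m + 1)) (by ring)).app X) hX))

lemma zero {X Y : C} (f : X ⟶ Y) {n m : ℤ} (hnm : n < m) (hX : w.LE (X⟦-n⟧))
    (hY : w.GE (Y⟦-m⟧)) : f = 0 := by
  have hY' : w.GE ((Y⟦-n⟧)⟦(-1 : ℤ)⟧) :=
    w.ge_of_iso ((shiftFunctorAdd' C (-n) (-1) (-(n + 1)) (by ring)).app Y)
      (w.ge_of_le (by omega) hY)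
  exact (shiftFunctor C (-n)).map_injective
    (by rw [w.orthogonal ((shiftFunctor C (-n)).map f) hX hY', Functor.map_zero])

lemma le_of_hom_eq_zero {X : C} (hX : ∀ ⦃Y : C⦄ (g : X ⟶ Y), w.GE (Y⟦(-1 : ℤ)⟧) → g = 0) :
    w.LE X := by
  obtain ⟨A, B, a, b, _, hT, hA, hB⟩ := w.exists_weight_filtration X
  obtain ⟨s, hs⟩ := Triangle.coyoneda_exact₂ _ hT (𝟙 X) ((Category.id_comp _).trans (hX b hB))
  exact w.le_retract s a hs.symm hA

lemma le_of_distTriang {T : Triangle C} (hT : T ∈ distTriang C) {n : ℤ}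
    (h₁ : w.LE (T.obj₁⟦-n⟧)) (h₃ : w.LE (T.obj₃⟦-n⟧)) : w.LE (T.obj₂⟦-n⟧) := by
  refine w.le_of_hom_eq_zero fun Y g hY => ?_
  obtain ⟨g', rfl⟩ := Triangle.yoneda_exact₂ _ (Triangle.shift_distinguished T hT (-n)) g
    (w.orthogonal _ h₁ hY)
  rw [w.orthogonal g' h₃ hY]
  exact comp_zero

lemma ge_of_hom_eq_zero {X : C} {n : ℤ}
    (hX : ∀ ⦃Y : C⦄ (g : Y ⟶ X), w.LE (Y⟦-n⟧) → g = 0) : w.GE (X⟦-(n + 1)⟧) := by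
  obtain ⟨A, B, a, b, _, hT, hA, hB⟩ := w.exists_weight_filtration (X⟦-n⟧)
  have ha : a = 0 := (shiftFunctor C n).map_injective <| by
    have h : a⟦n⟧' ≫ ((shiftFunctorCompIsoId C (-n) n (by omega)).app X).hom = 0 :=
      hX _ (w.le_of_iso ((shiftFunctorCompIsoId C n (-n) (by omega)).app A).symm hA)
    rwa [Functor.map_zero, ← cancel_mono ((shiftFunctorCompIsoId C (-n) n (by omega)).app X).hom,
      zero_comp]
  obtain ⟨s, hs⟩ : ∃ s : B ⟶ X⟦-n⟧, 𝟙 _ = b ≫ s :=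
    Triangle.yoneda_exact₂ _ hT (𝟙 _) ((Category.comp_id a).trans ha)
  have hX' : w.GE ((X⟦-n⟧)⟦(-1 : ℤ)⟧) :=
    w.ge_retract (b⟦(-1 : ℤ)⟧') (s⟦(-1 : ℤ)⟧')
      (by rw [← Functor.map_comp, ← hs, CategoryTheory.Functor.map_id]) hB
  exact w.ge_of_iso ((shiftFunctorAdd' C (-n) (-1) (-(n + 1)) (by ring)).app X).symm hX'

end WeightStructure

/-- The property of being without weights `α, …, β` is stable under extensions:
if `K → L → M → K[1]` is exact and `K` and `M` are without weights `α, …, β`,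
then so is `L`. -/
theorem stmt9 (w : WeightStructure C) (α β : ℤ) (hαβ : α ≤ β) (K L M : C)
    (f : K ⟶ L) (g : L ⟶ M) (h : M ⟶ K⟦(1 : ℤ)⟧)
    (hdist : Triangle.mk f g h ∈ distTriang C)
    (hK : WithoutWeights w α β K) (hM : WithoutWeights w α β M) :
    WithoutWeights w α β L := by
  obtain ⟨AK, BK, iK, _, _, hTK, hAK, hBK⟩ := hK
  obtain ⟨AM, BM, iM, _, _, hTM, hAM, hBM⟩ := hM
  have hBK₁ : w.GE ((BK⟦(1 : ℤ)⟧)⟦-(β + 2)⟧) :=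
    w.ge_of_iso ((shiftFunctorAdd' C 1 (-(β + 2)) (-(β + 1)) (by ring)).app BK) hBK
  obtain ⟨d, hd⟩ := Triangle.rightComp_shift_mor₁_surjective hTK
    (fun b => w.zero b (show α - 1 < β + 2 by omega) hAM hBK₁) (iM ≫ h)
  obtain ⟨L', u, v, hT'⟩ := distinguished_cocone_triangle₂ d
  obtain ⟨φ, hφ₁, hφ₂⟩ := complete_distinguished_triangle_morphism₂ _ _ hT' hdist iK iM hd
  let Φ : Triangle.mk u v d ⟶ Triangle.mk f g h :=
    { hom₁ := iK, hom₂ := φ, hom₃ := iM, comm₁ := hφ₁, comm₂ := hφ₂, comm₃ := hd }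
  obtain ⟨Q, π, δ, hTQ⟩ := distinguished_cocone_triangle φ
  refine ⟨L', Q, φ, π, δ, hTQ, w.le_of_distTriang hT' hAK hAM,
    w.ge_of_hom_eq_zero fun X t hX => ?_⟩
  have vanish : ∀ ⦃B : C⦄ (b : X ⟶ B), w.GE (B⟦-(β + 1)⟧) → b = 0 :=
    fun _ b hB => w.zero b (lt_add_one β) hX hB
  have hK₁ := Triangle.rightComp_mor₁_surjective hTK fun b => vanish b hBK
  have hK₁' := Triangle.rightComp_shift_mor₁_injective hTK fun b => vanish b hBK
  have hM₁ := Triangle.rightComp_mor₁_surjective hTM fun b => vanish b hBM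
  have hM₁' := Triangle.rightComp_shift_mor₁_injective hTM fun b => vanish b hBM
  have hφ := Triangle.rightComp_hom₂_surjective hT' hdist Φ hK₁ hM₁ hK₁'
  -- rotating twice puts `φ⟦1⟧'` in third position
  have hφ' := Triangle.rightComp_hom₃_injective (rot_of_distTriang _ (rot_of_distTriang _ hT'))
    (rot_of_distTriang _ (rot_of_distTriang _ hdist))
    ((Pretriangulated.rotate C).map ((Pretriangulated.rotate C).map Φ)) hM₁ hK₁' hM₁'
  exact Triangle.eq_zero_of_rightComp_surjective_of_injective hTQ hφ hφ' t
end
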